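/- Let H_A be a Hermitian d_A×d_A matrix and H_B a Hermitian d_B×d_B matrix, each having at least two distinct eigenvalues. For T > 0 write γ_T(H) = exp(−H/T)/tr(exp(−H/T)). Then for T_A, T_B, T > 0, the equality γ_{T_A}(H_A) ⊗ γ_{T_B}(H_B) = γ_T(H_A ⊗ I + I ⊗ H_B) holds if and only if T_A = T_B = T. In particular, the composition of two equilibrium states with the same temperature T is the equilibrium state of the composed system at temperature T, and this is the unique way the product of Gibbs states is itself a Gibbs state of the joint Hamiltonian. -/

import Mathlib

open Kronecker

/-- The Gibbs state of the Hamiltonian `H` at temperature `T > 0`: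
`exp(-H/T) / tr(exp(-H/T))`. -/
noncomputable def gibbsState {n : Type*} [Fintype n] [DecidableEq n]
    (T : ℝ) (H : Matrix n n ℂ) : Matrix n n ℂ :=
  (Matrix.trace (NormedSpace.exp ((-T⁻¹ : ℝ) • H)))⁻¹ •
    NormedSpace.exp ((-T⁻¹ : ℝ) • H)

/-!
Diagonalise `H_A = U_A diag(a) U_A*` and `H_B = U_B diag(b) U_B*`. Then `U_A ⊗ U_B` diagonalises
the joint Hamiltonian, with eigenvalues `a i + b j`, and all Gibbs states involved are diagonal in
this common basis, with Boltzmann weights `p_T(E)_i = exp(-E_i/T) / Σ_k exp(-E_k/T)` as entries.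
Since `p_T(a + b)_(i,j) = p_T(a)_i p_T(b)_j`, the claim becomes
`p_{T_A}(a)_i p_{T_B}(b)_j = p_T(a)_i p_T(b)_j` for all `i, j`. Summing over `j` gives
`p_{T_A}(a) = p_T(a)`, and the ratio `p_T(a)_i / p_T(a)_i' = exp(-(a_i - a_i')/T)` at two distinct
energies pins down `T`.
-/

open Matrix Unitary

section Kronecker

variable {R n m : Type*} [CommRing R] [StarRing R] [Fintype n] [DecidableEq n]
  [Fintype m] [DecidableEq m]

def kroneckerUnitary (U : unitary (Matrix n n R)) (V : unitary (Matrix m m R)) :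
    unitary (Matrix (n × m) (n × m) R) :=
  ⟨U ⊗ₖ V, kronecker_mem_unitary U.2 V.2⟩

lemma conjStarAlgAut_kronecker (U : unitary (Matrix n n R)) (V : unitary (Matrix m m R))
    (A : Matrix n n R) (B : Matrix m m R) :
    conjStarAlgAut R (Matrix (n × m) (n × m) R) (kroneckerUnitary U V) (A ⊗ₖ B) =
      conjStarAlgAut R (Matrix n n R) U A ⊗ₖ conjStarAlgAut R (Matrix m m R) V B := by
  simp only [conjStarAlgAut_apply, kroneckerUnitary, star_eq_conjTranspose,
    conjTranspose_kronecker, mul_kronecker_mul]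

lemma conjStarAlgAut_kroneckerSum (U : unitary (Matrix n n R)) (V : unitary (Matrix m m R))
    (A : Matrix n n R) (B : Matrix m m R) :
    conjStarAlgAut R (Matrix n n R) U A ⊗ₖ (1 : Matrix m m R) +
        (1 : Matrix n n R) ⊗ₖ conjStarAlgAut R (Matrix m m R) V B =
      conjStarAlgAut R (Matrix (n × m) (n × m) R) (kroneckerUnitary U V) (A ⊗ₖ 1 + 1 ⊗ₖ B) := by
  rw [map_add, conjStarAlgAut_kronecker, conjStarAlgAut_kronecker, map_one, map_one]

omit [StarRing R] [Fintype n] [Fintype m] in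
lemma diagonal_kronecker_one_add_one_kronecker_diagonal (a : n → R) (b : m → R) :
    diagonal a ⊗ₖ (1 : Matrix m m R) + (1 : Matrix n n R) ⊗ₖ diagonal b =
      diagonal fun p => a p.1 + b p.2 := by
  simp only [← diagonal_one, diagonal_kronecker_diagonal, diagonal_add, mul_one, one_mul]

end Kronecker

lemma Matrix.IsHermitian.kroneckerSum_eq {𝕜 n m : Type*} [RCLike 𝕜] [Fintype n] [DecidableEq n]
    [Fintype m] [DecidableEq m] {A : Matrix n n 𝕜} {B : Matrix m m 𝕜} (hA : A.IsHermitian)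
    (hB : B.IsHermitian) :
    A ⊗ₖ (1 : Matrix m m 𝕜) + (1 : Matrix n n 𝕜) ⊗ₖ B =
      conjStarAlgAut 𝕜 (Matrix (n × m) (n × m) 𝕜)
        (kroneckerUnitary hA.eigenvectorUnitary hB.eigenvectorUnitary)
        (diagonal (RCLike.ofReal ∘ fun p => hA.eigenvalues p.1 + hB.eigenvalues p.2)) := by
  conv_lhs => rw [hA.spectral_theorem, hB.spectral_theorem]
  rw [conjStarAlgAut_kroneckerSum, diagonal_kronecker_one_add_one_kronecker_diagonal]
  congr 2
  simp [Function.comp_def]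

lemma eq_of_forall_mul_eq_mul {ι κ R : Type*} [Fintype κ] [CommSemiring R] {p p' : ι → R}
    {q q' : κ → R} (hq : ∑ j, q j = 1) (hq' : ∑ j, q' j = 1)
    (h : ∀ i j, p i * q j = p' i * q' j) : p = p' := by
  ext i
  simpa only [← Finset.mul_sum, hq, hq', mul_one] using
    Finset.sum_congr (s₁ := Finset.univ) rfl fun j _ => h i j

section Boltzmann

variable {n m : Type*} [Fintype n] [Fintype m]

noncomputable def boltzmannWeights (T : ℝ) (E : n → ℝ) (i : n) : ℝ :=
  Real.exp (-T⁻¹ * E i) / ∑ j, Real.exp (-T⁻¹ * E j)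

lemma partitionFunction_pos [Nonempty n] (T : ℝ) (E : n → ℝ) :
    0 < ∑ j, Real.exp (-T⁻¹ * E j) :=
  Finset.sum_pos (fun _ _ => Real.exp_pos _) Finset.univ_nonempty

lemma sum_boltzmannWeights [Nonempty n] (T : ℝ) (E : n → ℝ) :
    ∑ i, boltzmannWeights T E i = 1 := by
  simp only [boltzmannWeights, ← Finset.sum_div]
  exact div_self (partitionFunction_pos T E).ne'

lemma boltzmannWeights_add (T : ℝ) (E : n → ℝ) (F : m → ℝ) (i : n) (j : m) :
    boltzmannWeights T (fun p : n × m => E p.1 + F p.2) (i, j) =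
      boltzmannWeights T E i * boltzmannWeights T F j := by
  simp only [boltzmannWeights, mul_add, Real.exp_add, Fintype.sum_prod_type, ← Finset.mul_sum,
    ← Finset.sum_mul]
  rw [mul_div_mul_comm]

lemma boltzmannWeights_div (T : ℝ) (E : n → ℝ) (i j : n) :
    boltzmannWeights T E i / boltzmannWeights T E j = Real.exp (-T⁻¹ * (E i - E j)) := by
  have : Nonempty n := ⟨i⟩
  rw [boltzmannWeights, boltzmannWeights, div_div_div_cancel_right₀ (partitionFunction_pos T E).ne',
    ← Real.exp_sub, mul_sub]

lemma eq_of_boltzmannWeights_eq {S T : ℝ} {E : n → ℝ} {i j : n} (hE : E i ≠ E j)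
    (h : boltzmannWeights S E = boltzmannWeights T E) : S = T := by
  have hexp := boltzmannWeights_div S E i j
  rw [h, boltzmannWeights_div, Real.exp_eq_exp, neg_mul, neg_mul, neg_inj] at hexp
  exact inv_inj.mp (mul_right_cancel₀ (sub_ne_zero.mpr hE) hexp).symm

lemma boltzmannWeights_mul_eq_iff {TA TB T : ℝ} {E : n → ℝ} {F : m → ℝ} {i i' : n} {j j' : m}
    (hE : E i ≠ E i') (hF : F j ≠ F j') :
    (∀ i j, boltzmannWeights TA E i * boltzmannWeights TB F j =
      boltzmannWeights T E i * boltzmannWeights T F j) ↔ TA = T ∧ TB = T := by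
  have : Nonempty n := ⟨i⟩
  have : Nonempty m := ⟨j⟩
  refine ⟨fun h => ⟨?_, ?_⟩, fun ⟨hA, hB⟩ _ _ => by rw [hA, hB]⟩
  · exact eq_of_boltzmannWeights_eq hE <|
      eq_of_forall_mul_eq_mul (sum_boltzmannWeights _ F) (sum_boltzmannWeights _ F) h
  · refine eq_of_boltzmannWeights_eq hF <|
      eq_of_forall_mul_eq_mul (sum_boltzmannWeights TA E) (sum_boltzmannWeights T E) fun j i => ?_
    rw [mul_comm, h, mul_comm]

end Boltzmann

section Gibbs

variable {n : Type*} [Fintype n] [DecidableEq n]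

lemma gibbsState_conjStarAlgAut (T : ℝ) (U : unitary (Matrix n n ℂ)) (H : Matrix n n ℂ) :
    gibbsState T (conjStarAlgAut ℂ (Matrix n n ℂ) U H) =
      conjStarAlgAut ℂ (Matrix n n ℂ) U (gibbsState T H) := by
  have hexp (A : Matrix n n ℂ) : NormedSpace.exp (conjStarAlgAut ℂ (Matrix n n ℂ) U A) =
      conjStarAlgAut ℂ (Matrix n n ℂ) U (NormedSpace.exp A) :=
    Matrix.exp_units_conj (Unitary.toUnits U) A
  have htrace (A : Matrix n n ℂ) : trace (conjStarAlgAut ℂ (Matrix n n ℂ) U A) = trace A := by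
    rw [conjStarAlgAut_apply, trace_mul_cycle, Unitary.coe_star_mul_self, one_mul]
  have hsmul (r : ℝ) (A : Matrix n n ℂ) : r • conjStarAlgAut ℂ (Matrix n n ℂ) U A =
      conjStarAlgAut ℂ (Matrix n n ℂ) U (r • A) := by
    rw [← Complex.coe_smul, ← Complex.coe_smul, map_smul]
  rw [gibbsState, gibbsState, hsmul, hexp, htrace, map_smul]

lemma gibbsState_diagonal (T : ℝ) (E : n → ℝ) :
    gibbsState T (diagonal (RCLike.ofReal ∘ E)) =
      diagonal (RCLike.ofReal ∘ boltzmannWeights T E) := by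
  rw [gibbsState, ← diagonal_smul, Matrix.exp_diagonal, trace_diagonal, ← diagonal_smul]
  congr 1
  ext i
  simp [boltzmannWeights, Pi.exp_def, ← Complex.exp_eq_exp_ℂ, div_eq_inv_mul]

lemma Matrix.IsHermitian.gibbsState_eq {H : Matrix n n ℂ} (hH : H.IsHermitian) (T : ℝ) :
    gibbsState T H = conjStarAlgAut ℂ (Matrix n n ℂ) hH.eigenvectorUnitary
      (diagonal (RCLike.ofReal ∘ boltzmannWeights T hH.eigenvalues)) := by
  conv_lhs => rw [hH.spectral_theorem]
  rw [gibbsState_conjStarAlgAut, gibbsState_diagonal]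

end Gibbs

theorem stmt_5 (dA dB : ℕ)
    (HA : Matrix (Fin dA) (Fin dA) ℂ) (HB : Matrix (Fin dB) (Fin dB) ℂ)
    (hA : HA.IsHermitian) (hB : HB.IsHermitian)
    (hA2 : ∃ i j, hA.eigenvalues i ≠ hA.eigenvalues j)
    (hB2 : ∃ i j, hB.eigenvalues i ≠ hB.eigenvalues j)
    (TA TB T : ℝ) :
    gibbsState TA HA ⊗ₖ gibbsState TB HB =
      gibbsState T (HA ⊗ₖ (1 : Matrix (Fin dB) (Fin dB) ℂ) +
        (1 : Matrix (Fin dA) (Fin dA) ℂ) ⊗ₖ HB) ↔ TA = T ∧ TB = T := by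
  obtain ⟨i, i', ha⟩ := hA2
  obtain ⟨j, j', hb⟩ := hB2
  rw [hA.gibbsState_eq, hB.gibbsState_eq, ← conjStarAlgAut_kronecker, hA.kroneckerSum_eq hB,
    gibbsState_conjStarAlgAut, gibbsState_diagonal, EquivLike.apply_eq_iff_eq,
    diagonal_kronecker_diagonal, diagonal_eq_diagonal_iff]
  simp only [Prod.forall, Function.comp_apply, boltzmannWeights_add, ← RCLike.ofReal_mul,
    RCLike.ofReal_inj]
  exact boltzmannWeights_mul_eq_iff ha hb
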